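/- arXiv:1109.0748 — 7 statements merged into one kernel-verified Lean document; each statement's English description precedes it below -/
import Mathlib

section
/- Let n be a positive integer and let a : ZMod (4n) → ℤ take only the values 1 and −1, such that the circulant matrix H with H i j = a (j − i) satisfies H * Hᵀ = (4n : ℤ) • 1. Let r be the number of indices i : ZMod (4n) with a i = −1. Then (2n − r)² = n; equivalently, there exists a natural number u with n = u² and either r = 2n + u or r = 2n − u. -/
/-!
Summing all entries of `H * Hᵀ = 4n • 1` gives `∑ₖ (column sum k)² = 4n · 4n`. Every column of a
circulant matrix sums to `s = ∑ᵢ a i = 4n - 2r`, so `4n · s² = (4n)²`, i.e. `(4n - 2r)² = 4n`,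
which is `(2n - r)² = n`.
-/

open Matrix Finset

section SumOfEntries

variable {ι κ R : Type*} [Fintype ι] [Fintype κ]

theorem Matrix.sum_sum_mul_transpose_apply [CommSemiring R] (A : Matrix ι κ R) :
    ∑ i, ∑ j, (A * Aᵀ) i j = ∑ k, (∑ i, A i k) ^ 2 := by
  simp only [mul_apply, transpose_apply, sq, sum_mul_sum]
  conv_rhs => rw [sum_comm]
  exact sum_congr rfl fun _ _ => Finset.sum_comm

theorem Matrix.sum_sum_smul_one_apply [DecidableEq ι] [Semiring R] (c : R) :
    ∑ i, ∑ j, (c • 1 : Matrix ι ι R) i j = Fintype.card ι * c := by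
  simp [one_apply, ← nsmul_eq_mul]

theorem Matrix.sq_eq_of_mul_transpose_eq_smul_one [DecidableEq ι] [Nonempty ι] [CommRing R]
    [IsDomain R] [CharZero R] {H : Matrix ι ι R} {c s : R} (hH : H * Hᵀ = c • 1)
    (hcol : ∀ k, ∑ i, H i k = s) : s ^ 2 = c := by
  have h := H.sum_sum_mul_transpose_apply
  simp only [hH, sum_sum_smul_one_apply, hcol, sum_const, card_univ, nsmul_eq_mul] at h
  exact (mul_left_cancel₀ (Nat.cast_ne_zero.mpr Fintype.card_ne_zero) h).symm

end SumOfEntries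

theorem Fintype.sum_eq_card_sub_two_mul_card_neg_one {ι : Type*} [Fintype ι] {a : ι → ℤ}
    (ha : ∀ i, a i = 1 ∨ a i = -1) :
    ∑ i, a i = Fintype.card ι - 2 * (univ.filter fun i => a i = -1).card := by
  have h (i : ι) : a i = 1 - 2 * if a i = -1 then 1 else 0 := by
    rcases ha i with h | h <;> simp [h]
  rw [Fintype.sum_congr _ _ h, sum_sub_distrib, ← mul_sum, Finset.sum_boole]
  simp

theorem Nat.exists_eq_sq_and_eq_two_mul_add_or_sub {n r : ℕ} (h : ((2 * n : ℤ) - r) ^ 2 = n) :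
    ∃ u : ℕ, n = u ^ 2 ∧ (r = 2 * n + u ∨ r = 2 * n - u) := by
  refine ⟨((2 * n : ℤ) - r).natAbs, ?_, ?_⟩
  · zify
    rw [sq_abs, h]
  · rcases Int.natAbs_eq ((2 * n : ℤ) - r) with h' | h' <;> omega

/-- If `H i j = a (j - i)` is a circulant Hadamard matrix of order `4n` with entries `±1`,
and `r` is the number of `-1` entries in the generating vector (hence in each row and
column), then `(2n - r)² = n`; equivalently `n = u²` is a perfect square and
`r = 2n + u` or `r = 2n - u`. -/
theorem circulant_hadamard_count_neg_ones
    (n : ℕ) [NeZero n] (a : ZMod (4 * n) → ℤ)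
    (ha : ∀ i, a i = 1 ∨ a i = -1)
    (H : Matrix (ZMod (4 * n)) (ZMod (4 * n)) ℤ)
    (hH : ∀ i j, H i j = a (j - i))
    (hHad : H * H.transpose = ((4 * n : ℕ) : ℤ) • 1)
    (r : ℕ) (hr : r = (Finset.univ.filter fun i => a i = -1).card) :
    ((2 * n : ℤ) - r) ^ 2 = n ∧
      ∃ u : ℕ, n = u ^ 2 ∧ (r = 2 * n + u ∨ r = 2 * n - u) := by
  have hcol (k : ZMod (4 * n)) : ∑ i, H i k = ∑ i, a i := by
    simp only [hH]
    exact (Equiv.subLeft k).sum_comp a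
  have hsq := sq_eq_of_mul_transpose_eq_smul_one hHad hcol
  rw [Fintype.sum_eq_card_sub_two_mul_card_neg_one ha, ← hr, ZMod.card] at hsq
  have key : ((2 * n : ℤ) - r) ^ 2 = n := by push_cast at hsq; linarith
  exact ⟨key, Nat.exists_eq_sq_and_eq_two_mul_add_or_sub key⟩
end

section
/- Let n be a positive integer. If there exists a : ZMod (4n) → ℤ taking only the values 1 and −1 such that the circulant matrix H with H i j = a (j − i) satisfies H * Hᵀ = (4n : ℤ) • 1, then n is a perfect square, i.e., there exists a natural number u with n = u². -/
/-!
All row and column sums of a circulant matrix equal `s = ∑ i, a i`, so applying `H * Hᵀ` to the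
all-ones vector multiplies it by `s ^ 2`. Comparing with `H * Hᵀ = 4n • 1` gives `s ^ 2 = 4n`;
hence `s` is even and `n = (s / 2) ^ 2`.
-/

open Matrix

namespace Matrix

variable {n α : Type*} [Fintype n] [Semiring α]

theorem circulant_mulVec_one [AddGroup n] (v : n → α) :
    circulant v *ᵥ 1 = (∑ i, v i) • 1 := by
  ext i
  simpa [mulVec, dotProduct, circulant_apply] using
    Fintype.sum_equiv (Equiv.subLeft i) _ _ fun _ => rfl

theorem transpose_circulant_mulVec_one [AddGroup n] (v : n → α) :
    (circulant v)ᵀ *ᵥ 1 = (∑ i, v i) • 1 := by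
  ext i
  simpa [mulVec, dotProduct, circulant_apply] using
    Fintype.sum_equiv (Equiv.subRight i) _ _ fun _ => rfl

theorem sq_eq_of_mul_transpose_eq_smul_one_s2 {R : Type*} [CommSemiring R] [DecidableEq n]
    [Nonempty n] {M : Matrix n n R} {s c : R} (hrow : M *ᵥ 1 = s • 1) (hcol : Mᵀ *ᵥ 1 = s • 1)
    (hM : M * Mᵀ = c • 1) : s ^ 2 = c := by
  have h : (M * Mᵀ) *ᵥ 1 = (s ^ 2) • (1 : n → R) := by
    rw [← mulVec_mulVec, hcol, mulVec_smul, hrow, smul_smul, sq]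
  rw [hM, smul_mulVec, one_mulVec] at h
  simpa using (congrFun h (Classical.arbitrary n)).symm

end Matrix

theorem exists_eq_sq_of_sq_eq_four_mul {s : ℤ} {n : ℕ} (h : s ^ 2 = 4 * n) :
    ∃ u : ℕ, n = u ^ 2 := by
  obtain ⟨t, rfl⟩ : (2 : ℤ) ∣ s :=
    Int.prime_two.dvd_of_dvd_pow (n := 2) ⟨2 * n, by rw [h]; ring⟩
  refine ⟨t.natAbs, ?_⟩
  zify
  rw [sq_abs]
  linarith

/-- If a circulant Hadamard matrix of order `4n` exists, then `n` is a perfect square. -/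
theorem circulant_hadamard_isSquare
    (n : ℕ) [NeZero n]
    (h : ∃ a : ZMod (4 * n) → ℤ, (∀ i, a i = 1 ∨ a i = -1) ∧
      ∃ H : Matrix (ZMod (4 * n)) (ZMod (4 * n)) ℤ,
        (∀ i j, H i j = a (j - i)) ∧ H * H.transpose = ((4 * n : ℕ) : ℤ) • 1) :
    ∃ u : ℕ, n = u ^ 2 := by
  obtain ⟨a, -, H, hH, hHH⟩ := h
  obtain rfl : H = (circulant a)ᵀ := by
    ext i j
    rw [hH, transpose_apply, circulant_apply]
  have hsum : (∑ i, a i) ^ 2 = ((4 * n : ℕ) : ℤ) :=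
    sq_eq_of_mul_transpose_eq_smul_one_s2 (transpose_circulant_mulVec_one a)
      (by rw [transpose_transpose]; exact circulant_mulVec_one a) hHH
  exact exists_eq_sq_of_sq_eq_four_mul (by exact_mod_cast hsum)
end

section
/- Let m be a positive integer. If there exists a : ZMod m → ℤ taking only the values 1 and −1 such that the circulant matrix H with H i j = a (j − i) satisfies H * Hᵀ = (m : ℤ) • 1, then m = 1 or there exists a positive natural number u with m = 4u². -/
/-!
The all-ones vector is a common eigenvector of a circulant matrix `H`, with eigenvalue the row
sum `s`, so `H * Hᵀ = m • 1` forces `m = s²`. Two distinct rows of a `±1` Hadamard matrix are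
orthogonal, so its order is even once it exceeds `1`; hence `s` is even and `m = 4 (s / 2)²`.
-/

open Matrix

theorem Matrix.IsHadamard.two_dvd_card {n : Type*} [Fintype n] [DecidableEq n]
    {A : Matrix n n ℤ} (hA : A.IsHadamard) (hcard : 1 < Fintype.card n) :
    2 ∣ Fintype.card n := by
  rcases (Nat.succ_le_of_lt hcard).eq_or_lt with hcard2 | hcard2
  · exact hcard2 ▸ dvd_rfl
  · exact dvd_trans (by norm_num) (hA.four_dvd_card hcard2)

theorem Matrix.IsHadamard.card_eq_sq_of_apply_eq_sub {G : Type*} [AddCommGroup G] [Fintype G]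
    [DecidableEq G] {H : Matrix G G ℤ} (hH : H.IsHadamard) {a : G → ℤ}
    (hHa : ∀ i j, H i j = a (j - i)) :
    (Fintype.card G : ℤ) = (∑ j, a j) ^ 2 := by
  have hrow : ∀ i, ∑ j, H i j = ∑ j, a j := fun i => by
    simpa only [hHa, Equiv.subRight_apply] using (Equiv.subRight i).sum_comp a
  have hreg : IsRegular (Fintype.card G : ℤ) :=
    isRegular_iff_ne_zero.2 (mod_cast Fintype.card_ne_zero)
  rw [hH.card_eq_star_mul_of_const_row_sum hreg hrow, star_trivial, sq]

theorem Nat.exists_pos_sq_eq_four_mul_sq_of_two_dvd {k : ℕ} (hk : k ≠ 0) (h2 : 2 ∣ k ^ 2) :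
    ∃ u, 0 < u ∧ k ^ 2 = 4 * u ^ 2 := by
  obtain ⟨u, rfl⟩ := Nat.prime_two.dvd_of_dvd_pow h2
  exact ⟨u, Nat.pos_of_ne_zero (right_ne_zero_of_mul hk), by ring⟩

/-- A circulant Hadamard matrix of order `m` forces `m = 1` or `m = 4u²` for some `u > 0`. -/
theorem circulant_hadamard_order_eq_one_or_four_mul_sq
    (m : ℕ) [NeZero m]
    (h : ∃ a : ZMod m → ℤ, (∀ i, a i = 1 ∨ a i = -1) ∧
      ∃ H : Matrix (ZMod m) (ZMod m) ℤ,
        (∀ i j, H i j = a (j - i)) ∧ H * H.transpose = (m : ℤ) • 1) :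
    m = 1 ∨ ∃ u : ℕ, 0 < u ∧ m = 4 * u ^ 2 := by
  obtain ⟨a, ha, H, hHa, hHH⟩ := h
  have hcard : Fintype.card (ZMod m) = m := ZMod.card m
  have hH : H.IsHadamard := by
    refine (isHadamard_iff_mul_conjTranspose
      (isRegular_iff_ne_zero.2 (by simp [hcard, NeZero.ne m]))).2 ⟨fun i j => ?_, ?_⟩
    · exact Unitary.mem_iff_eq_one_or_eq_neg_one.2 (hHa i j ▸ ha (j - i))
    · rwa [conjTranspose_eq_transpose_of_trivial, hcard]
  have hsq : m = (∑ j, a j).natAbs ^ 2 := by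
    have := hH.card_eq_sq_of_apply_eq_sub hHa
    rw [hcard, ← Int.natAbs_sq] at this
    exact_mod_cast this
  rcases (Nat.one_le_iff_ne_zero.2 (NeZero.ne m)).eq_or_lt with hm | hm
  · exact Or.inl hm.symm
  · have h2 : 2 ∣ m := hcard ▸ hH.two_dvd_card (by rwa [hcard])
    rw [hsq] at h2 ⊢
    exact Or.inr (Nat.exists_pos_sq_eq_four_mul_sq_of_two_dvd
      (ne_zero_pow two_ne_zero (by rw [← hsq]; exact NeZero.ne m)) h2)
end

section
/- Let m be a positive integer and let A be an m×m matrix over ℤ with all entries in {1, −1}, whose rows are pairwise orthogonal (A * Aᵀ = (m : ℤ) • 1). Suppose there is a natural number r such that every row of A contains exactly r entries equal to −1 and every column of A contains exactly r entries equal to −1. Then (m − 2r)² = m; in particular m is a perfect square and 2r = m + √m or 2r = m − √m. -/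
open Matrix Finset

/-! Every column of `A` sums to `c = m - 2r`. Evaluating the quadratic form of `A * Aᵀ = m • 1`
at the all-ones vector gives `∑ⱼ (column sum j)² = m c²` on one side and `m · m` on the other,
so `c² = m`. -/

theorem sum_eq_card_sub_two_mul_card_filter_eq_neg_one {ι R : Type*} [Ring R] [DecidableEq R]
    (s : Finset ι) (f : ι → R) (hf : ∀ i ∈ s, f i = 1 ∨ f i = -1) :
    ∑ i ∈ s, f i = #s - 2 * #{i ∈ s | f i = -1} := by
  have hpointwise : ∀ i ∈ s, f i = 1 - 2 * if f i = -1 then 1 else 0 := by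
    intro i hi
    split_ifs with hneg
    · rw [hneg]; norm_num
    · simpa using (hf i hi).resolve_right hneg
  rw [sum_congr rfl hpointwise, sum_sub_distrib, ← mul_sum, sum_boole, sum_const, nsmul_one]

theorem card_mul_sq_eq_of_mul_transpose_eq_smul_one {m n R : Type*} [Fintype m] [Fintype n]
    [CommRing R] [DecidableEq m] (A : Matrix m n R) (k c : R) (hA : A * Aᵀ = k • 1)
    (hcol : ∀ j, ∑ i, A i j = c) : Fintype.card n * c ^ 2 = k * Fintype.card m := by
  have hcolVec : Aᵀ *ᵥ (fun _ => 1) = fun _ => c := by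
    ext j; simp [mulVec, dotProduct, hcol]
  have hrowVec : (fun _ => 1) ᵥ* A = fun _ => c := by
    ext j; simp [vecMul, dotProduct, hcol]
  calc (Fintype.card n : R) * c ^ 2 = (fun _ => 1) ᵥ* A ⬝ᵥ Aᵀ *ᵥ (fun _ => 1) := by
        rw [hrowVec, hcolVec]; simp [dotProduct, sq]
    _ = (fun _ => 1) ⬝ᵥ (A * Aᵀ) *ᵥ (fun _ => 1) := by
        rw [← dotProduct_mulVec, mulVec_mulVec]
    _ = k * Fintype.card m := by
        rw [hA]; simp [dotProduct, smul_mulVec, mul_comm]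

theorem exists_nat_sq_eq_of_sub_sq_eq (a b n : ℕ) (h : ((a : ℤ) - b) ^ 2 = n) :
    ∃ u : ℕ, n = u ^ 2 ∧ (b = a + u ∨ b = a - u) := by
  refine ⟨((a : ℤ) - b).natAbs, ?_, ?_⟩
  · rw [← Int.natCast_inj, ← h, Int.natCast_pow, Int.natAbs_sq]
  rcases Int.natAbs_eq ((a : ℤ) - b) with h | h <;> omega

theorem regular_pm_one_orthogonal_rows_count_general
    (m : ℕ) (hm : 0 < m)
    (A : Matrix (Fin m) (Fin m) ℤ)
    (hA : ∀ i j, A i j = 1 ∨ A i j = -1)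
    (hOrth : A * A.transpose = (m : ℤ) • 1)
    (r : ℕ)
    (hcol : ∀ j, (Finset.univ.filter fun i => A i j = -1).card = r) :
    ((m : ℤ) - 2 * r) ^ 2 = m ∧
      ∃ u : ℕ, m = u ^ 2 ∧ (2 * r = m + u ∨ 2 * r = m - u) := by
  have hcolSum : ∀ j, ∑ i, A i j = (m : ℤ) - 2 * r := fun j => by
    rw [sum_eq_card_sub_two_mul_card_filter_eq_neg_one _ _ fun i _ => hA i j, hcol j,
      card_univ, Fintype.card_fin]
  have hcard := card_mul_sq_eq_of_mul_transpose_eq_smul_one A _ _ hOrth hcolSum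
  rw [Fintype.card_fin] at hcard
  have hsq : ((m : ℤ) - 2 * r) ^ 2 = m := mul_left_cancel₀ (by exact_mod_cast hm.ne') hcard
  exact ⟨hsq, exists_nat_sq_eq_of_sub_sq_eq m (2 * r) m (by exact_mod_cast hsq)⟩

/-- Lemma (regular `±1` matrix with orthogonal rows): if every row and every column of
an `m × m` matrix `A` with entries `±1` and `A * Aᵀ = m • 1` contains exactly `r`
entries equal to `-1`, then `(m - 2r)² = m`; in particular `m = u²` is a perfect
square and `2r = m + u` or `2r = m - u`. -/
theorem regular_pm_one_orthogonal_rows_count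
    (m : ℕ) (hm : 0 < m)
    (A : Matrix (Fin m) (Fin m) ℤ)
    (hA : ∀ i j, A i j = 1 ∨ A i j = -1)
    (hOrth : A * A.transpose = (m : ℤ) • 1)
    (r : ℕ)
    (hrow : ∀ i, (Finset.univ.filter fun j => A i j = -1).card = r)
    (hcol : ∀ j, (Finset.univ.filter fun i => A i j = -1).card = r) :
    ((m : ℤ) - 2 * r) ^ 2 = m ∧
      ∃ u : ℕ, m = u ^ 2 ∧ (2 * r = m + u ∨ 2 * r = m - u) :=
  regular_pm_one_orthogonal_rows_count_general m hm A hA hOrth r hcol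
end

section
/- Let n be a positive integer and let a : ZMod (4n) → ℤ take only the values 1 and −1, such that the circulant matrix H with H i j = a (j − i) satisfies H * Hᵀ = (4n : ℤ) • 1. Define v : ZMod (4n) → ℤ by v i = a i − a (i + 2n). Then for every t : ZMod (4n) with t ≠ 0 and t ≠ 2n, the sum over i : ZMod (4n) of v i * v (i + t) equals 0. -/
/-!
The orthogonality relations of a circulant Hadamard matrix say that the periodic
autocorrelation of its first row vanishes at every nonzero shift. Expanding
`v i * v (i + t)` with `v i = a i - a (i + 2n)` and using `2n + 2n = 0` writes the
autocorrelation of `v` at `t` as twice the difference of the autocorrelations of `a`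
at `t` and at `t + 2n`; both shifts are nonzero when `t ≠ 0, 2n`.
-/

open Matrix Finset

section Autocorrelation

variable {G R : Type*} [AddCommGroup G] [Fintype G] [CommRing R]

def autocorr (a : G → R) (s : G) : R :=
  ∑ i, a i * a (i + s)

theorem autocorr_eq_mul_transpose_apply (a : G → R) (H : Matrix G G R)
    (hH : ∀ i j, H i j = a (j - i)) (s : G) :
    autocorr a s = (H * Hᵀ) 0 (-s) := by
  simp only [autocorr, mul_apply, transpose_apply, hH, sub_zero, sub_neg_eq_add]

theorem autocorr_eq_zero_of_mul_transpose_eq_smul_one [DecidableEq G] (a : G → R)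
    (H : Matrix G G R) (hH : ∀ i j, H i j = a (j - i)) {m : R} (hHad : H * Hᵀ = m • 1)
    {s : G} (hs : s ≠ 0) :
    autocorr a s = 0 := by
  rw [autocorr_eq_mul_transpose_apply a H hH, hHad, Matrix.smul_apply,
    one_apply_ne (by simpa using hs), smul_zero]

theorem sum_translate_mul_eq_autocorr (a : G → R) (c s : G) :
    ∑ i, a (i + c) * a (i + c + s) = autocorr a s :=
  Equiv.sum_comp (Equiv.addRight c) fun i => a i * a (i + s)

theorem autocorr_sub_translate {c : G} (hc : c + c = 0) (a : G → R) (t : G) :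
    autocorr (fun i => a i - a (i + c)) t = 2 * (autocorr a t - autocorr a (t + c)) := by
  have hcross : ∑ i, a (i + c) * a (i + t) = autocorr a (t + c) := by
    rw [← sum_translate_mul_eq_autocorr a c (t + c)]
    refine sum_congr rfl fun i _ => ?_
    rw [add_add_add_comm, hc, add_zero]
  have expand : autocorr (fun i => a i - a (i + c)) t
      = autocorr a t - autocorr a (t + c) - ∑ i, a (i + c) * a (i + t)
        + ∑ i, a (i + c) * a (i + c + t) := by
    simp only [autocorr, ← sum_sub_distrib, ← sum_add_distrib]
    refine sum_congr rfl fun i _ => ?_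
    rw [add_right_comm i c t, add_assoc]
    ring
  rw [expand, hcross, sum_translate_mul_eq_autocorr]
  ring

end Autocorrelation

theorem ZMod.two_mul_add_two_mul_eq_zero (n : ℕ) :
    (2 * n : ZMod (4 * n)) + 2 * n = 0 := by
  have h : ((4 * n : ℕ) : ZMod (4 * n)) = 0 := ZMod.natCast_self _
  push_cast at h
  linear_combination h

theorem circulant_hadamard_odd_block_autocorrelation_general
    (n : ℕ) [NeZero n] (a : ZMod (4 * n) → ℤ)
    (H : Matrix (ZMod (4 * n)) (ZMod (4 * n)) ℤ)
    (hH : ∀ i j, H i j = a (j - i))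
    (hHad : H * H.transpose = ((4 * n : ℕ) : ℤ) • 1)
    (v : ZMod (4 * n) → ℤ)
    (hv : ∀ i, v i = a i - a (i + 2 * n)) :
    ∀ t : ZMod (4 * n), t ≠ 0 → t ≠ (2 * n : ZMod (4 * n)) →
      ∑ i : ZMod (4 * n), v i * v (i + t) = 0 := by
  intro t ht ht2
  have hc := ZMod.two_mul_add_two_mul_eq_zero n
  have htc : t + 2 * n ≠ 0 := fun h => ht2 (by linear_combination h - hc)
  obtain rfl : v = fun i => a i - a (i + 2 * n) := funext hv
  change autocorr _ t = 0
  rw [autocorr_sub_translate hc,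
    autocorr_eq_zero_of_mul_transpose_eq_smul_one a H hH hHad ht,
    autocorr_eq_zero_of_mul_transpose_eq_smul_one a H hH hHad htc]
  ring

/-- For a circulant Hadamard matrix of order `4n`, the odd-block function
`v i = a i - a (i + 2n)` satisfies `∑ i, v i * v (i + t) = 0` for every
`t ≠ 0`, `t ≠ 2n`. -/
theorem circulant_hadamard_odd_block_autocorrelation
    (n : ℕ) [NeZero n] (a : ZMod (4 * n) → ℤ)
    (ha : ∀ i, a i = 1 ∨ a i = -1)
    (H : Matrix (ZMod (4 * n)) (ZMod (4 * n)) ℤ)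
    (hH : ∀ i j, H i j = a (j - i))
    (hHad : H * H.transpose = ((4 * n : ℕ) : ℤ) • 1)
    (v : ZMod (4 * n) → ℤ)
    (hv : ∀ i, v i = a i - a (i + 2 * n)) :
    ∀ t : ZMod (4 * n), t ≠ 0 → t ≠ (2 * n : ZMod (4 * n)) →
      ∑ i : ZMod (4 * n), v i * v (i + t) = 0 :=
  circulant_hadamard_odd_block_autocorrelation_general n a H hH hHad v hv
end

section
/- Let n be a positive integer and let a : ZMod (4n) → ℤ take only the values 1 and −1, such that the circulant matrix H with H i j = a (j − i) satisfies H * Hᵀ = (4n : ℤ) • 1. Define u : ZMod (4n) → ℤ by u i = a i + a (i + 2n). Then for every t : ZMod (4n) with t ≠ 0 and t ≠ 2n, the sum over i : ZMod (4n) of u i * u (i + t) equals 0. -/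
/-!
The rows of a circulant matrix are the shifts of its generator `a`, so `H * Hᵀ = m • 1` says
exactly that the periodic autocorrelation of `a` vanishes at every nonzero shift. Expanding the
autocorrelation of `u i = a i + a (i + d)` gives `2 A(t) + A(t + d) + A(t - d)`, where `A` is the
autocorrelation of `a`. For `d = 2n` in `ZMod (4n)` the shifts `t + d` and `t - d` coincide, and
all three shifts are nonzero once `t ∉ {0, 2n}`.
-/

open Matrix Finset

section Autocorrelation

variable {G R : Type*} [AddCommGroup G] [Fintype G] [CommRing R]

def autocorrelation (a : G → R) (t : G) : R :=
  ∑ i, a i * a (i + t)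

theorem autocorrelation_eq_sum_sub (a : G → R) (i j : G) :
    ∑ k, a (k - i) * a (k - j) = autocorrelation a (i - j) := by
  rw [autocorrelation, ← Equiv.sum_comp (Equiv.addRight i)]
  refine Fintype.sum_congr _ _ fun k => ?_
  simp only [Equiv.coe_addRight, add_sub_cancel_right]
  congr 2
  abel

theorem autocorrelation_eq_zero_of_mul_transpose_eq_smul_one [DecidableEq G] {a : G → R}
    {H : Matrix G G R} (hH : ∀ i j, H i j = a (j - i)) {c : R} (hHad : H * Hᵀ = c • 1)
    {s : G} (hs : s ≠ 0) : autocorrelation a s = 0 := by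
  have h := congrFun (congrFun hHad s) 0
  rw [mul_apply, Matrix.smul_apply, one_apply_ne hs, smul_zero] at h
  simp only [transpose_apply, hH] at h
  rwa [autocorrelation_eq_sum_sub, sub_zero] at h

theorem autocorrelation_add_shift (a : G → R) (d t : G) :
    autocorrelation (fun i => a i + a (i + d)) t =
      2 * autocorrelation a t + autocorrelation a (t + d) + autocorrelation a (t - d) := by
  have shifted_left : ∑ i, a (i + d) * a (i + t) = autocorrelation a (t - d) := by
    rw [autocorrelation, ← Equiv.sum_comp (Equiv.addRight d) fun i => a i * a (i + (t - d))]
    simp only [Equiv.coe_addRight, add_add_sub_cancel]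
  have shifted_both : ∑ i, a (i + d) * a (i + t + d) = autocorrelation a t := by
    rw [autocorrelation, ← Equiv.sum_comp (Equiv.addRight d) fun i => a i * a (i + t)]
    simp only [Equiv.coe_addRight, add_right_comm]
  calc autocorrelation (fun i => a i + a (i + d)) t
      = autocorrelation a t + ∑ i, a i * a (i + (t + d)) + ∑ i, a (i + d) * a (i + t)
          + ∑ i, a (i + d) * a (i + t + d) := by
        simp only [autocorrelation, ← sum_add_distrib, add_assoc]
        refine Fintype.sum_congr _ _ fun i => ?_
        ring
    _ = _ := by
        rw [shifted_left, shifted_both, ← autocorrelation]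
        ring

end Autocorrelation

theorem circulant_hadamard_even_block_autocorrelation_general
    (n : ℕ) [NeZero n] (a : ZMod (4 * n) → ℤ)
    (H : Matrix (ZMod (4 * n)) (ZMod (4 * n)) ℤ)
    (hH : ∀ i j, H i j = a (j - i))
    (hHad : H * H.transpose = ((4 * n : ℕ) : ℤ) • 1)
    (u : ZMod (4 * n) → ℤ)
    (hu : ∀ i, u i = a i + a (i + 2 * n)) :
    ∀ t : ZMod (4 * n), t ≠ 0 → t ≠ (2 * n : ZMod (4 * n)) →
      ∑ i : ZMod (4 * n), u i * u (i + t) = 0 := by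
  intro t ht ht2
  have h2n : (2 * n : ZMod (4 * n)) = -(2 * n) := by
    rw [eq_neg_iff_add_eq_zero, ← two_mul, ← mul_assoc]
    exact_mod_cast ZMod.natCast_self (4 * n)
  have hA {s : ZMod (4 * n)} (hs : s ≠ 0) : autocorrelation a s = 0 :=
    autocorrelation_eq_zero_of_mul_transpose_eq_smul_one hH hHad hs
  have hsub : t - 2 * n ≠ 0 := sub_ne_zero.mpr ht2
  rw [show u = fun i => a i + a (i + 2 * n) from funext hu, ← autocorrelation,
    autocorrelation_add_shift, hA ht, hA hsub]
  rw [h2n, ← sub_eq_add_neg, hA hsub]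
  ring

/-- For a circulant Hadamard matrix of order `4n`, the even-block function
`u i = a i + a (i + 2n)` satisfies `∑ i, u i * u (i + t) = 0` for every
`t ≠ 0`, `t ≠ 2n`. -/
theorem circulant_hadamard_even_block_autocorrelation
    (n : ℕ) [NeZero n] (a : ZMod (4 * n) → ℤ)
    (ha : ∀ i, a i = 1 ∨ a i = -1)
    (H : Matrix (ZMod (4 * n)) (ZMod (4 * n)) ℤ)
    (hH : ∀ i j, H i j = a (j - i))
    (hHad : H * H.transpose = ((4 * n : ℕ) : ℤ) • 1)
    (u : ZMod (4 * n) → ℤ)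
    (hu : ∀ i, u i = a i + a (i + 2 * n)) :
    ∀ t : ZMod (4 * n), t ≠ 0 → t ≠ (2 * n : ZMod (4 * n)) →
      ∑ i : ZMod (4 * n), u i * u (i + t) = 0 :=
  circulant_hadamard_even_block_autocorrelation_general n a H hH hHad u hu
end

section
/- Let G be a finite group and f : G → ℤ a function taking only the values 1 and −1, and suppose the group matrix M indexed by G with M g h = f (g⁻¹ * h) satisfies M * Mᵀ = (|G| : ℤ) • 1 (M is Hadamard). Then |G| = 1 or there exists a positive natural number u with |G| = 4u². -/
/-!
Every column of a group matrix is a permutation of the values of `f`, so all column sums equal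
`s = ∑ g, f g`. Summing all entries of `M * Mᵀ = n • 1` then gives `n * n = n * s²`, i.e.
`n = s²`. Two distinct rows of `M` are orthogonal and their entrywise product consists of `n`
odd numbers, so `n` is even; hence `s` is even and `n = 4 (s / 2)²`.
-/

open Matrix

theorem Int.even_card_of_sum_eq_zero {ι : Type*} [Fintype ι] (x : ι → ℤ)
    (hx : ∀ i, Odd (x i)) (hsum : ∑ i, x i = 0) : Even (Fintype.card ι) := by
  have := congrArg (Int.cast : ℤ → ZMod 2) hsum
  push_cast at this
  simp only [(ZMod.intCast_eq_one_iff_odd).2 (hx _), Finset.sum_const, Finset.card_univ] at this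
  simpa [ZMod.natCast_eq_zero_iff_even] using this

theorem Nat.exists_eq_four_mul_sq_of_even_of_cast_eq_sq {n : ℕ} {s : ℤ} (hn : Even n)
    (hs : (n : ℤ) = s ^ 2) : ∃ u, n = 4 * u ^ 2 := by
  have hn' : n = s.natAbs ^ 2 := by rw [← Int.natAbs_pow, ← hs, Int.natAbs_natCast]
  obtain ⟨u, hu⟩ := (Nat.even_pow' two_ne_zero).1 (hn' ▸ hn)
  exact ⟨u, by rw [hn', hu]; ring⟩

theorem sum_apply_inv_mul {G β : Type*} [Group G] [Fintype G] [AddCommMonoid β] (f : G → β)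
    (h : G) : ∑ g, f (g⁻¹ * h) = ∑ g, f g :=
  Fintype.sum_equiv ((Equiv.inv G).trans (Equiv.mulRight h)) _ _ fun _ ↦ rfl

namespace Matrix

variable {m n R : Type*} [Fintype m] [Fintype n] [CommSemiring R]

theorem sum_sum_mul_transpose_apply_s18 (M : Matrix m n R) :
    ∑ i, ∑ j, (M * Mᵀ) i j = ∑ k, (∑ i, M i k) ^ 2 := by
  simp only [mul_apply, transpose_apply, sq, Finset.sum_mul_sum, Finset.sum_comm (γ := n)]

theorem card_mul_eq_card_mul_sq_of_mul_transpose_eq_smul_one [DecidableEq m] {M : Matrix m n R}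
    {c s : R} (hM : M * Mᵀ = c • 1) (hcol : ∀ k, ∑ i, M i k = s) :
    Fintype.card m * c = Fintype.card n * s ^ 2 := by
  simpa [hM, hcol, smul_apply, one_apply, mul_comm] using M.sum_sum_mul_transpose_apply_s18

end Matrix

/-- If the group matrix `M g h = f (g⁻¹ * h)` of a `±1`-valued function `f` on a finite
group `G` is Hadamard, then `|G| = 1` or `|G| = 4u²` for some positive natural `u`. -/
theorem hadamard_group_matrix_card_eq_one_or_four_mul_sq
    (G : Type*) [Group G] [Fintype G] [DecidableEq G]
    (f : G → ℤ) (hf : ∀ g, f g = 1 ∨ f g = -1)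
    (M : Matrix G G ℤ)
    (hM : ∀ g h, M g h = f (g⁻¹ * h))
    (hHad : M * M.transpose = ((Fintype.card G : ℕ) : ℤ) • 1) :
    Fintype.card G = 1 ∨ ∃ u : ℕ, 0 < u ∧ Fintype.card G = 4 * u ^ 2 := by
  obtain hn | hn := le_or_gt (Fintype.card G) 1
  · exact Or.inl (le_antisymm hn Fintype.card_pos)
  right
  have hodd : ∀ g h, Odd (M g h) := fun g h ↦ by
    rcases hf (g⁻¹ * h) with hfg | hfg <;> simp [hM, hfg]
  have heven : Even (Fintype.card G) := by
    obtain ⟨g, g', hne⟩ := Fintype.exists_pair_of_one_lt_card hn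
    refine Int.even_card_of_sum_eq_zero _ (fun k ↦ (hodd g k).mul (hodd g' k)) ?_
    simpa [mul_apply, hne] using congrFun (congrFun hHad g) g'
  have hcol : ∀ h, ∑ g, M g h = ∑ g, f g := fun h ↦ by simp only [hM, sum_apply_inv_mul]
  have hsq : (Fintype.card G : ℤ) = (∑ g, f g) ^ 2 :=
    mul_left_cancel₀ (by positivity)
      (card_mul_eq_card_mul_sq_of_mul_transpose_eq_smul_one hHad hcol)
  obtain ⟨u, hu⟩ := Nat.exists_eq_four_mul_sq_of_even_of_cast_eq_sq heven hsq
  exact ⟨u, Nat.pos_of_ne_zero (by rintro rfl; omega), hu⟩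
end
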